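/- Let d ≥ 1, α < 2 and 0 < q < p < ∞. Then Ψ_{α,q} = 𝔓_{α,p→q} ∘ Ψ_{α,p}: the domains coincide, i.e. 𝔇(Ψ_{α,q}) = {M ∈ 𝔇(Ψ_{α,p}) : Ψ_{α,p}M ∈ 𝔇(𝔓_{α,p→q})}, and for every M in this common domain one has 𝔓_{α,p→q}(Ψ_{α,p} M) = Ψ_{α,q} M as measures on ℝ^d. -/

import Mathlib

open MeasureTheory Set

noncomputable section

variable {E : Type*} [NormedAddCommGroup E] [NormedSpace ℝ E]
  [MeasurableSpace E] [BorelSpace E]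

/-- The upsilon transform with dilation measure `ρ` on `(0,∞) ⊆ ℝ`:
`[Υ_ρ M](B) = ∫ M(s⁻¹ B) ρ(ds)`, realized as the image of `ρ ⊗ M` under `(s, x) ↦ s • x`. -/
def Upsilon (ρ : Measure ℝ) (M : Measure E) : Measure E :=
  Measure.map (fun sx : ℝ × E => sx.1 • sx.2) (ρ.prod M)

/-- `M` is a Lévy measure: σ-finite, no mass at `0`, and `∫ (|x|² ∧ 1) M(dx) < ∞`. -/
def IsLevyMeasure (M : Measure E) : Prop :=
  SigmaFinite M ∧ M {0} = 0 ∧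
    ∫⁻ x, ENNReal.ofReal (min (‖x‖ ^ 2) 1) ∂M < ⊤

/-- The domain `𝔇(Υ_ρ)`: Lévy measures `M` such that `Υ_ρ M` is again a Lévy measure. -/
def UpsilonDomain (ρ : Measure ℝ) : Set (Measure E) :=
  {M | IsLevyMeasure M ∧ IsLevyMeasure (Upsilon ρ M)}

/-- The range `ℜ(Υ_ρ) = {Υ_ρ M : M ∈ 𝔇(Υ_ρ)}`. -/
def UpsilonRange (ρ : Measure ℝ) : Set (Measure E) :=
  Upsilon ρ '' UpsilonDomain (E := E) ρ

/-- The class `𝔐^α`: Borel measures with `M({0}) = 0` and `∫ (|x|² ∧ |x|^α) M(dx) < ∞`. -/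
def MemMAlpha (α : ℝ) (M : Measure E) : Prop :=
  M {0} = 0 ∧ ∫⁻ x, ENNReal.ofReal (min (‖x‖ ^ 2) (‖x‖ ^ α)) ∂M < ⊤

/-- The class `𝔐^log`: Lévy measures with `∫_{|x|>1} log|x| M(dx) < ∞`. -/
def MemMLog (M : Measure E) : Prop :=
  IsLevyMeasure M ∧
    ∫⁻ x in {x : E | 1 < ‖x‖}, ENNReal.ofReal (Real.log ‖x‖) ∂M < ⊤

/-- The dilation measure `ψ_{α,p}(ds) = s^{-α-1} e^{-s^p} 1_{s>0} ds`. -/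
def psiMeasure (α p : ℝ) : Measure ℝ :=
  (volume : Measure ℝ).withDensity fun s =>
    if 0 < s then ENNReal.ofReal (s ^ (-α - 1) * Real.exp (-(s ^ p))) else 0

/-- `K_{α,β,p} = ∫₀^∞ u^{α-β-1} e^{-u^p} du`. -/
def Kconst (α β p : ℝ) : ℝ :=
  ∫ u in Ioi (0 : ℝ), u ^ (α - β - 1) * Real.exp (-(u ^ p))

/-- The dilation measure
`τ_{β→α,p}(ds) = K_{α,β,p}⁻¹ s^{-α-1} (1-s^p)^{(α-β)/p - 1} 1_{0<s<1} ds`. -/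
def tauMeasure (β α p : ℝ) : Measure ℝ :=
  (volume : Measure ℝ).withDensity fun s =>
    if 0 < s ∧ s < 1 then
      ENNReal.ofReal ((Kconst α β p)⁻¹ * (s ^ (-α - 1) * (1 - s ^ p) ^ ((α - β) / p - 1)))
    else 0

/-- `f` is the density of the fully right-skewed `r`-stable distribution on `(0,∞)`:
a nonnegative measurable function with `∫₀^∞ e^{-t x} f(x) dx = e^{-t^r}` for all `t ≥ 0`. -/
def IsStableDensity (r : ℝ) (f : ℝ → ℝ) : Prop :=
  Measurable f ∧ (∀ x, 0 ≤ f x) ∧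
    ∀ t : ℝ, 0 ≤ t →
      ∫ x in Ioi (0 : ℝ), Real.exp (-(t * x)) * f x = Real.exp (-(t ^ r))

/-- The dilation measure `π_{α,p→q}(ds) = p f_{q/p}(s^{-p}) s^{-α-p-1} 1_{s>0} ds`,
where `f` is (to be assumed) the density of the fully right-skewed `q/p`-stable law. -/
def piMeasure (f : ℝ → ℝ) (α p : ℝ) : Measure ℝ :=
  (volume : Measure ℝ).withDensity fun s =>
    if 0 < s then ENNReal.ofReal (p * f (s ^ (-p)) * s ^ (-α - p - 1)) else 0

/-- The measure `ρ(ds) = g(s) 1_{s>0} ds`. -/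
def densMeasure (g : ℝ → ℝ) : Measure ℝ :=
  (volume : Measure ℝ).withDensity fun s => if 0 < s then ENNReal.ofReal (g s) else 0

/-!
`Υ_ρ M` is the image of `ρ ⊗ M` under `(s, x) ↦ s • x`, so `Υ_{ρ₂} Υ_{ρ₁} = Υ_{ρ₂ ∗ₘ ρ₁}`, where
`∗ₘ` is the multiplicative convolution of dilation measures. For densities on `(0, ∞)` it is
`(g ∗ₘ h)(u) = ∫ g(t) h(u/t) dt/t`; substituting `x = t^{-p}` and using the Laplace transform of
the `q/p`-stable density gives
`∫ π_{α,p→q}(t) ψ_{α,p}(u/t) dt/t = u^{-α-1} ∫ f(x) e^{-u^p x} dx = u^{-α-1} e^{-u^q}`,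
i.e. `π_{α,p→q} ∗ₘ ψ_{α,p} = ψ_{α,q}`, so `𝔓_{α,p→q} Ψ_{α,p} M = Ψ_{α,q} M` for every Lévy
measure `M`. For the domains, `e^{-s^p} ≤ e · e^{-s^q}` gives `Ψ_{α,p} M ≤ e • Ψ_{α,q} M`, so
`Ψ_{α,p} M` is a Lévy measure as soon as `Ψ_{α,q} M` is.
-/

open scoped ENNReal

lemma measurable_smul_prod : Measurable fun sx : ℝ × E => sx.1 • sx.2 := by fun_prop

lemma upsilon_apply (ρ : Measure ℝ) (M : Measure E) [SFinite M] {B : Set E}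
    (hB : MeasurableSet B) :
    Upsilon ρ M B = ∫⁻ s, M ((s • ·) ⁻¹' B) ∂ρ := by
  rw [Upsilon, Measure.map_apply measurable_smul_prod hB,
    Measure.prod_apply (measurable_smul_prod hB)]
  rfl

lemma lintegral_upsilon (ρ : Measure ℝ) (M : Measure E) [SFinite M] {g : E → ℝ≥0∞}
    (hg : Measurable g) :
    ∫⁻ y, g y ∂Upsilon ρ M = ∫⁻ s, ∫⁻ x, g (s • x) ∂M ∂ρ := by
  rw [Upsilon, lintegral_map hg measurable_smul_prod]
  exact lintegral_prod _ (hg.comp measurable_smul_prod).aemeasurable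

lemma upsilon_upsilon (ρ₁ ρ₂ : Measure ℝ) [SFinite ρ₁] (M : Measure E) [SFinite M] :
    Upsilon ρ₂ (Upsilon ρ₁ M) = Upsilon (ρ₂ ∗ₘ ρ₁) M := by
  have : SFinite (Upsilon ρ₁ M) := by unfold Upsilon; infer_instance
  refine Measure.ext fun B hB => ?_
  have hg : Measurable (B.indicator (1 : E → ℝ≥0∞)) := measurable_one.indicator hB
  rw [← lintegral_indicator_one hB, ← lintegral_indicator_one hB, lintegral_upsilon _ _ hg,
    lintegral_upsilon _ _ hg, Measure.lintegral_mconv]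
  · refine lintegral_congr fun t => ?_
    simp only [mul_smul]
    exact lintegral_upsilon _ _ (hg.comp (measurable_const_smul t))
  · exact (hg.comp measurable_smul_prod).lintegral_prod_right'

lemma upsilon_le_smul {ρ ρ' : Measure ℝ} {c : ℝ≥0∞} (h : ρ ≤ c • ρ') (M : Measure E)
    [SFinite M] : Upsilon ρ M ≤ c • Upsilon ρ' M := by
  refine Measure.le_iff.2 fun B hB => ?_
  rw [Measure.smul_apply, upsilon_apply _ _ hB, upsilon_apply _ _ hB]
  exact (lintegral_mono' h le_rfl).trans_eq (lintegral_smul_measure _ _)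

lemma IsLevyMeasure.of_le_smul {F : Type*} [NormedAddCommGroup F] [MeasurableSpace F]
    {μ ν : Measure F} (hμ : IsLevyMeasure μ) {c : ℝ≥0∞} (hc : c ≠ ∞) (h : ν ≤ c • μ) :
    IsLevyMeasure ν := by
  obtain ⟨hσ, h0, hfin⟩ := hμ
  lift c to NNReal using hc
  rw [← ENNReal.smul_def] at h
  refine ⟨Measure.sigmaFinite_of_le _ h, le_antisymm ?_ zero_le, ?_⟩
  · simpa [h0] using h {0}
  · calc _ ≤ ∫⁻ x, ENNReal.ofReal (min (‖x‖ ^ 2) 1) ∂(c • μ) := lintegral_mono' h le_rfl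
      _ < ⊤ := by
        rw [lintegral_smul_measure]
        exact ENNReal.mul_lt_top ENNReal.coe_lt_top hfin

instance (g : ℝ → ℝ) : SFinite (densMeasure g) := by
  unfold densMeasure; infer_instance

lemma densMeasure_eq_withDensity (g : ℝ → ℝ) :
    densMeasure g = (volume.restrict (Ioi 0)).withDensity fun s => ENNReal.ofReal (g s) :=
  withDensity_indicator measurableSet_Ioi _

lemma lintegral_densMeasure {g : ℝ → ℝ} (hg : Measurable g) (F : ℝ → ℝ≥0∞) :
    ∫⁻ s, F s ∂densMeasure g = ∫⁻ s in Ioi 0, ENNReal.ofReal (g s) * F s := by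
  rw [densMeasure_eq_withDensity, lintegral_withDensity_eq_lintegral_mul_non_measurable _
    hg.ennreal_ofReal (ae_of_all _ fun _ => ENNReal.ofReal_lt_top)]
  rfl

lemma lintegral_comp_mul_left_Ioi (G : ℝ → ℝ≥0∞) {t : ℝ} (ht : 0 < t) :
    ∫⁻ s in Ioi 0, G (t * s) = (ENNReal.ofReal t)⁻¹ * ∫⁻ u in Ioi 0, G u := by
  have h := lintegral_image_eq_lintegral_abs_deriv_mul (measurableSet_Ioi (a := 0))
    (fun s _ => ((hasDerivAt_id s).const_mul t).hasDerivWithinAt)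
    (mul_right_injective₀ ht.ne').injOn G
  simp only [id, mul_one, abs_of_pos ht, image_const_mul_Ioi_zero ht] at h
  rw [h, lintegral_const_mul' _ _ ENNReal.ofReal_ne_top,
    ENNReal.inv_mul_cancel_left (ENNReal.ofReal_pos.2 ht).ne' ENNReal.ofReal_ne_top]

lemma lintegral_comp_rpow_Ioi (g : ℝ → ℝ≥0∞) {p : ℝ} (hp : p ≠ 0) :
    ∫⁻ x in Ioi 0, ENNReal.ofReal (|p| * x ^ (p - 1)) * g (x ^ p) = ∫⁻ y in Ioi 0, g y := by
  have himage : (· ^ p) '' Ioi (0 : ℝ) = Ioi 0 := by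
    ext x
    refine ⟨fun ⟨y, hy, hyx⟩ => hyx ▸ Real.rpow_pos_of_pos hy p, fun hx => ?_⟩
    exact ⟨x ^ (1 / p), Real.rpow_pos_of_pos hx _, by simp [← Real.rpow_mul (le_of_lt hx), hp]⟩
  have h := lintegral_image_eq_lintegral_abs_deriv_mul measurableSet_Ioi
    (fun x hx => (Real.hasDerivAt_rpow_const (Or.inl (mem_Ioi.mp hx).ne')).hasDerivWithinAt)
    ((Real.rpow_left_injOn hp).mono fun x (hx : 0 < x) => hx.le) g
  rw [himage] at h
  rw [h]
  refine setLIntegral_congr_fun measurableSet_Ioi fun x hx => ?_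
  rw [abs_mul, abs_of_nonneg (Real.rpow_nonneg (le_of_lt hx) _)]

theorem densMeasure_mconv_densMeasure {g h k : ℝ → ℝ} (hg : Measurable g) (hh : Measurable h)
    (hk : Measurable k)
    (hghk : ∀ u > 0, ∫⁻ t in Ioi 0,
      ENNReal.ofReal (g t) * ENNReal.ofReal (h (u / t)) / ENNReal.ofReal t = ENNReal.ofReal (k u)) :
    densMeasure g ∗ₘ densMeasure h = densMeasure k := by
  refine Measure.ext fun B hB => ?_
  set F := B.indicator (1 : ℝ → ℝ≥0∞)
  have hF : Measurable F := measurable_one.indicator hB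
  rw [← lintegral_indicator_one hB, ← lintegral_indicator_one hB]
  calc ∫⁻ u, F u ∂(densMeasure g ∗ₘ densMeasure h)
      = ∫⁻ t in Ioi 0, ENNReal.ofReal (g t) * ∫⁻ s in Ioi 0, ENNReal.ofReal (h s) * F (t * s) := by
        simp_rw [Measure.lintegral_mconv hF, lintegral_densMeasure hg, lintegral_densMeasure hh]
    _ = ∫⁻ t in Ioi 0, ∫⁻ u in Ioi 0,
          ENNReal.ofReal (g t) * ENNReal.ofReal (h (u / t)) / ENNReal.ofReal t * F u := by
        refine setLIntegral_congr_fun measurableSet_Ioi fun t (ht : 0 < t) => ?_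
        have := lintegral_comp_mul_left_Ioi (fun u => ENNReal.ofReal (h (u / t)) * F u) ht
        have ht' : ENNReal.ofReal t ≠ 0 := (ENNReal.ofReal_pos.2 ht).ne'
        simp only [mul_div_cancel_left₀ _ ht.ne'] at this
        rw [this, ← mul_assoc, ← lintegral_const_mul' _ _
          (ENNReal.mul_ne_top ENNReal.ofReal_ne_top (ENNReal.inv_ne_top.2 ht'))]
        congr with u
        rw [ENNReal.div_eq_inv_mul]
        ring
    _ = ∫⁻ u in Ioi 0, ∫⁻ t in Ioi 0,
          ENNReal.ofReal (g t) * ENNReal.ofReal (h (u / t)) / ENNReal.ofReal t * F u :=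
        lintegral_lintegral_swap (by fun_prop)
    _ = ∫⁻ u in Ioi 0, ENNReal.ofReal (k u) * F u := by
        refine setLIntegral_congr_fun measurableSet_Ioi fun u hu => ?_
        rw [lintegral_mul_const _ (by fun_prop), hghk u hu]
    _ = ∫⁻ u, F u ∂densMeasure k := (lintegral_densMeasure hk F).symm

lemma IsStableDensity.lintegral_exp_neg_mul {r : ℝ} {f : ℝ → ℝ} (hf : IsStableDensity r f)
    {t : ℝ} (ht : 0 ≤ t) :
    ∫⁻ x in Ioi 0, ENNReal.ofReal (Real.exp (-(t * x)) * f x) =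
      ENNReal.ofReal (Real.exp (-(t ^ r))) := by
  obtain ⟨-, hf_nonneg, hLaplace⟩ := hf
  -- a non-integrable integrand would make the Bochner integral `0`, not `exp (-(t ^ r)) > 0`
  have hint : IntegrableOn (fun x => Real.exp (-(t * x)) * f x) (Ioi 0) := by
    by_contra h
    exact (Real.exp_pos _).ne' (by rw [← hLaplace t ht, integral_undef h])
  rw [← hLaplace t ht, ofReal_integral_eq_lintegral_ofReal hint
    (ae_of_all _ fun x => mul_nonneg (Real.exp_pos _).le (hf_nonneg x))]

lemma pi_mul_psi_density_eq {α p u t y : ℝ} (hu : 0 < u) (ht : 0 < t) :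
    p * y * t ^ (-α - p - 1) * ((u / t) ^ (-α - 1) * Real.exp (-((u / t) ^ p))) / t =
      u ^ (-α - 1) * (p * t ^ (-p - 1) * (Real.exp (-(u ^ p * t ^ (-p))) * y)) := by
  rw [show -α - p - 1 = (-α - 1) + -p by ring, Real.rpow_add ht, Real.rpow_sub_one ht.ne' (-p),
    Real.rpow_neg ht.le p, Real.div_rpow hu.le ht.le, Real.div_rpow hu.le ht.le]
  have : 0 < t ^ (-α - 1) := Real.rpow_pos_of_pos ht _
  have : 0 < t ^ p := Real.rpow_pos_of_pos ht _
  field_simp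

lemma lintegral_pi_mul_psi_density {α p q : ℝ} (hp : 0 < p) {f : ℝ → ℝ}
    (hf : IsStableDensity (q / p) f) {u : ℝ} (hu : 0 < u) :
    ∫⁻ t in Ioi 0, ENNReal.ofReal (p * f (t ^ (-p)) * t ^ (-α - p - 1)) *
        ENNReal.ofReal ((u / t) ^ (-α - 1) * Real.exp (-((u / t) ^ p))) / ENNReal.ofReal t =
      ENNReal.ofReal (u ^ (-α - 1) * Real.exp (-(u ^ q))) := by
  -- `|-p| * t ^ (-p - 1)` is the Jacobian of the substitution `x = t ^ (-p)`
  have hpoint : ∀ t ∈ Ioi (0 : ℝ),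
      ENNReal.ofReal (p * f (t ^ (-p)) * t ^ (-α - p - 1)) *
          ENNReal.ofReal ((u / t) ^ (-α - 1) * Real.exp (-((u / t) ^ p))) / ENNReal.ofReal t =
        ENNReal.ofReal (u ^ (-α - 1)) * (ENNReal.ofReal (|-p| * t ^ (-p - 1)) *
          ENNReal.ofReal (Real.exp (-(u ^ p * t ^ (-p))) * f (t ^ (-p)))) := by
    intro t (ht : 0 < t)
    have := hf.2.1 (t ^ (-p))
    rw [← ENNReal.ofReal_mul (by positivity), ← ENNReal.ofReal_div_of_pos ht,
      ← ENNReal.ofReal_mul (by positivity), ← ENNReal.ofReal_mul (by positivity), abs_neg,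
      abs_of_pos hp, pi_mul_psi_density_eq hu ht]
  rw [setLIntegral_congr_fun measurableSet_Ioi hpoint,
    lintegral_const_mul' _ _ ENNReal.ofReal_ne_top,
    lintegral_comp_rpow_Ioi (fun x => ENNReal.ofReal (Real.exp (-(u ^ p * x)) * f x))
      (neg_ne_zero.2 hp.ne'),
    hf.lintegral_exp_neg_mul (by positivity), ← Real.rpow_mul hu.le, mul_div_cancel₀ q hp.ne',
    ← ENNReal.ofReal_mul (by positivity)]

theorem piMeasure_mconv_psiMeasure (α : ℝ) {p q : ℝ} (hp : 0 < p) {f : ℝ → ℝ}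
    (hf : IsStableDensity (q / p) f) :
    piMeasure f α p ∗ₘ psiMeasure α p = psiMeasure α q :=
  densMeasure_mconv_densMeasure (hf.1.comp (by fun_prop) |>.const_mul p |>.mul (by fun_prop))
    (by fun_prop) (by fun_prop)
    fun _ hu => lintegral_pi_mul_psi_density hp hf hu

instance (α p : ℝ) : SFinite (psiMeasure α p) := by
  unfold psiMeasure; infer_instance

lemma psiMeasure_le_smul (α : ℝ) {p q : ℝ} (hq : 0 ≤ q) (hqp : q ≤ p) :
    psiMeasure α p ≤ ENNReal.ofReal (Real.exp 1) • psiMeasure α q := by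
  rw [psiMeasure, psiMeasure, ← withDensity_smul' _ _ ENNReal.ofReal_ne_top]
  refine withDensity_mono (ae_of_all _ fun s => ?_)
  simp only [Pi.smul_apply, smul_eq_mul]
  split_ifs with hs
  · rw [← ENNReal.ofReal_mul (Real.exp_pos 1).le]
    refine ENNReal.ofReal_le_ofReal ?_
    have hpow : s ^ q ≤ 1 + s ^ p := by
      rcases le_total s 1 with hs1 | hs1
      · linarith [Real.rpow_le_one hs.le hs1 hq, Real.rpow_nonneg hs.le p]
      · linarith [Real.rpow_le_rpow_of_exponent_le hs1 hqp]
    calc s ^ (-α - 1) * Real.exp (-(s ^ p))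
        ≤ s ^ (-α - 1) * Real.exp (1 + -(s ^ q)) := by gcongr; linarith
      _ = Real.exp 1 * (s ^ (-α - 1) * Real.exp (-(s ^ q))) := by rw [Real.exp_add]; ring
  · simp

theorem stmt10_general (d : ℕ) (α q p : ℝ) (hq : 0 < q) (hqp : q < p)
    (f : ℝ → ℝ) (hf : IsStableDensity (q / p) f) :
    UpsilonDomain (E := EuclideanSpace ℝ (Fin d)) (psiMeasure α q) =
      {M ∈ UpsilonDomain (psiMeasure α p) |
        Upsilon (psiMeasure α p) M ∈ UpsilonDomain (piMeasure f α p)} ∧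
    ∀ M ∈ UpsilonDomain (E := EuclideanSpace ℝ (Fin d)) (psiMeasure α q),
      Upsilon (piMeasure f α p) (Upsilon (psiMeasure α p) M) =
        Upsilon (psiMeasure α q) M := by
  have hcomp : ∀ M : Measure (EuclideanSpace ℝ (Fin d)), IsLevyMeasure M →
      Upsilon (piMeasure f α p) (Upsilon (psiMeasure α p) M) = Upsilon (psiMeasure α q) M := by
    intro M hM
    have := hM.1
    rw [upsilon_upsilon, piMeasure_mconv_psiMeasure α (hq.trans hqp) hf]
  have hpLevy : ∀ M ∈ UpsilonDomain (E := EuclideanSpace ℝ (Fin d)) (psiMeasure α q),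
      IsLevyMeasure (Upsilon (psiMeasure α p) M) := fun M ⟨hM, hMq⟩ =>
    have := hM.1
    hMq.of_le_smul ENNReal.ofReal_ne_top (upsilon_le_smul (psiMeasure_le_smul α hq.le hqp.le) M)
  refine ⟨Set.ext fun M => ⟨fun hM => ?_, fun ⟨⟨hM, _⟩, _, hMpq⟩ => ?_⟩,
    fun M hM => hcomp M hM.1⟩
  · refine ⟨⟨hM.1, hpLevy M hM⟩, hpLevy M hM, ?_⟩
    rw [hcomp M hM.1]
    exact hM.2
  · exact ⟨hM, hcomp M hM ▸ hMpq⟩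

theorem stmt10 (d : ℕ) (hd : 1 ≤ d) (α q p : ℝ) (hα : α < 2) (hq : 0 < q) (hqp : q < p)
    (f : ℝ → ℝ) (hf : IsStableDensity (q / p) f) :
    UpsilonDomain (E := EuclideanSpace ℝ (Fin d)) (psiMeasure α q) =
      {M ∈ UpsilonDomain (psiMeasure α p) |
        Upsilon (psiMeasure α p) M ∈ UpsilonDomain (piMeasure f α p)} ∧
    ∀ M ∈ UpsilonDomain (E := EuclideanSpace ℝ (Fin d)) (psiMeasure α q),
      Upsilon (piMeasure f α p) (Upsilon (psiMeasure α p) M) =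
        Upsilon (psiMeasure α q) M :=
  stmt10_general d α q p hq hqp f hf
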